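/- arXiv:1303.2878 — 2 statements merged into one kernel-verified Lean document; each statement's English description precedes it below -/
import Mathlib

section
/- Let (a_1,…,a_m) be a telescopic sequence and let S = a_1ℤ_{≥0} + ⋯ + a_mℤ_{≥0}. Then the number of gaps, i.e. the cardinality of ℤ_{≥0} \ S, equals g = (1 + Σ_{i=2}^m a_i·d_{i−1}/d_i − Σ_{i=1}^m a_i)/2. -/
/-- `dseq a i = gcd(a_1, …, a_i)`. -/
def dseq (a : ℕ → ℕ) (i : ℕ) : ℕ := (Finset.Icc 1 i).gcd a

/-- The telescopic condition:
`a_i/d_i ∈ (a_1/d_{i-1})ℤ_{≥0} + ⋯ + (a_{i-1}/d_{i-1})ℤ_{≥0}` for `2 ≤ i ≤ m`. -/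
def Telescopic (m : ℕ) (a : ℕ → ℕ) : Prop :=
  ∀ i, 2 ≤ i → i ≤ m →
    ∃ k : ℕ → ℕ,
      a i / dseq a i = ∑ j ∈ Finset.Icc 1 (i - 1), (a j / dseq a (i - 1)) * k j

/-!
Write `e_i = d_{i-1}/d_i`. The weights `w(g) = ∑_{i ≥ 2} a_i g_i` of the coefficient vectors
with `0 ≤ g_i < e_i` form the Apéry set of `S` with respect to `a_1`: there are
`∏ e_i = a_1 / d_m = a_1` of them; they are pairwise incongruent modulo `a_1`, since the highest
index where two vectors differ is detected modulo `d_{i-1}`, where `a_i` has order `e_i`; and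
every element of `S` is `a_1 k + w(g)` for one of them, because the telescopic condition writes
`a_i e_i` as a combination of `a_1, …, a_{i-1}`, so each coefficient can be reduced below `e_i`.
Selmer's formula then counts the gaps, and the involution `g_i ↦ e_i - 1 - g_i` of the box gives
`∑ w(g) = (a_1 / 2) ∑_{i ≥ 2} a_i (e_i - 1)`.
-/

open Finset

section Apery

variable {β : Type*} {S : Set ℕ} {A : ℕ} {B : Finset β} {w : β → ℕ}

-- `w` enumerates an Apéry set of `S` with respect to `A`: one element per residue class
-- modulo `A`, and `S` meets the class of `w x` exactly in `w x + Aℕ`.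
variable (hA : 0 < A) (hinj : Set.InjOn (w · % A) B) (hcard : #B = A)
  (hS : ∀ x ∈ B, ∀ n, n ≡ w x [MOD A] → (n ∈ S ↔ w x ≤ n))
include hA hinj hcard

theorem surjOn_mod_range : Set.SurjOn (w · % A) B (range A) :=
  surjOn_of_injOn_of_card_le _ (fun _ _ => mem_coe.mpr (mem_range.mpr (Nat.mod_lt _ hA))) hinj
    (by simp [hcard])

include hS

theorem ncard_compl_eq_sum_div : Sᶜ.ncard = ∑ x ∈ B, w x / A := by
  classical
  have hgaps : Sᶜ = ↑(B.biUnion fun x => {n ∈ range (w x) | n ≡ w x [MOD A]}) := by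
    ext n
    obtain ⟨x, hx, hxn⟩ := surjOn_mod_range hA hinj hcard (mem_range.mpr (Nat.mod_lt n hA))
    simp only [Set.mem_compl_iff, coe_biUnion, mem_coe, coe_filter, mem_range, Set.mem_iUnion,
      Set.mem_ofPred_eq, exists_prop, hS x hx n hxn.symm, not_le]
    refine ⟨fun h => ⟨x, hx, h, hxn.symm⟩, fun ⟨y, hy, hny, hmod⟩ => ?_⟩
    rwa [hinj hx hy (hxn.trans hmod)]
  rw [hgaps, Set.ncard_coe_finset, card_biUnion]
  · refine sum_congr rfl fun x _ => ?_
    rw [← Nat.count_eq_card_filter_range, Nat.count_modEq_card _ hA]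
    simp
  · intro x hx y hy hxy
    simp only [Function.onFun, disjoint_left, mem_filter]
    exact fun n hnx hny => hxy (hinj hx hy (hnx.2.symm.trans hny.2))

-- Selmer's formula `#Sᶜ = (∑ w) / A - (A - 1) / 2`.
theorem mul_two_mul_ncard_compl_add : A * (2 * Sᶜ.ncard) + A * (A - 1) = 2 * ∑ x ∈ B, w x := by
  have hres : ∑ x ∈ B, w x % A = ∑ r ∈ range A, r :=
    sum_nbij (w · % A) (fun _ _ => mem_range.mpr (Nat.mod_lt _ hA)) hinj
      (surjOn_mod_range hA hinj hcard) fun _ _ => rfl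
  have hdiv : A * ∑ x ∈ B, w x / A + ∑ x ∈ B, w x % A = ∑ x ∈ B, w x := by
    rw [mul_sum, ← sum_add_distrib]
    exact sum_congr rfl fun x _ => Nat.div_add_mod (w x) A
  rw [ncard_compl_eq_sum_div hA hinj hcard hS, ← hdiv, hres, ← sum_range_id_mul_two]
  ring

end Apery

theorem Finsupp.two_mul_sum_Iic_sum_mul {ι : Type*} [DecidableEq ι] (u : ι →₀ ℕ)
    (s : Finset ι) (c : ι → ℕ) :
    2 * ∑ g ∈ Iic u, ∑ i ∈ s, c i * g i = #(Iic u) * ∑ i ∈ s, c i * u i := by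
  have hflip : ∑ g ∈ Iic u, ∑ i ∈ s, c i * g i = ∑ g ∈ Iic u, ∑ i ∈ s, c i * (u - g) i :=
    Finset.sum_nbij' (u - ·) (u - ·) (fun g hg => by simp) (fun g hg => by simp)
      (fun g hg => tsub_tsub_cancel_of_le (mem_Iic.mp hg))
      (fun g hg => tsub_tsub_cancel_of_le (mem_Iic.mp hg)) fun g hg => by
        rw [tsub_tsub_cancel_of_le (mem_Iic.mp hg)]
  rw [two_mul]
  nth_rewrite 2 [hflip]
  rw [← Finset.sum_add_distrib, ← smul_eq_mul, ← Finset.sum_const]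
  refine Finset.sum_congr rfl fun g hg => ?_
  rw [← Finset.sum_add_distrib]
  refine Finset.sum_congr rfl fun i _ => ?_
  rw [← mul_add, Finsupp.tsub_apply, add_tsub_cancel_of_le (mem_Iic.mp hg i)]

theorem sum_Icc_one_eq_add {M : Type*} [AddCommMonoid M] {m : ℕ} (hm : 1 ≤ m) (f : ℕ → M) :
    ∑ i ∈ Icc 1 m, f i = f 1 + ∑ i ∈ Icc 2 m, f i := by
  rw [← insert_Icc_add_one_left_eq_Icc hm, sum_insert (by simp)]
  rfl

section Telescopic

variable {m : ℕ} {a : ℕ → ℕ}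

theorem dseq_one : dseq a 1 = a 1 := by
  simp [dseq]

theorem dseq_dvd {i j : ℕ} (hj : j ∈ Icc 1 i) : dseq a i ∣ a j :=
  gcd_dvd hj

theorem dseq_dvd_dseq {i j : ℕ} (h : j ≤ i) : dseq a i ∣ dseq a j :=
  Finset.dvd_gcd fun _ hk => gcd_dvd (Icc_subset_Icc_right h hk)

theorem dseq_pos (ha : 0 < a 1) {i : ℕ} (hi : 1 ≤ i) : 0 < dseq a i :=
  Nat.pos_of_dvd_of_pos (dseq_dvd (mem_Icc.mpr ⟨le_rfl, hi⟩)) ha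

theorem dseq_add_one {t : ℕ} : dseq a (t + 1) = Nat.gcd (dseq a t) (a (t + 1)) := by
  rw [dseq, ← insert_Icc_right_eq_Icc_add_one (by omega), gcd_insert, Nat.gcd_comm]
  rfl

def dseqRatio (a : ℕ → ℕ) (i : ℕ) : ℕ := dseq a (i - 1) / dseq a i

theorem dseqRatio_add_one_mul {t : ℕ} : dseqRatio a (t + 1) * dseq a (t + 1) = dseq a t :=
  Nat.div_mul_cancel (dseq_dvd_dseq (by omega))

theorem dseqRatio_pos (ha : 0 < a 1) {i : ℕ} (hi : 2 ≤ i) : 0 < dseqRatio a i :=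
  Nat.div_pos (Nat.le_of_dvd (dseq_pos ha (by omega)) (dseq_dvd_dseq (by omega)))
    (dseq_pos ha (by omega))

theorem prod_dseqRatio_mul_dseq {t : ℕ} (ht : 1 ≤ t) :
    (∏ i ∈ Icc 2 t, dseqRatio a i) * dseq a t = a 1 := by
  induction t, ht using Nat.le_induction with
  | base => simp [dseq_one]
  | succ t ht ih =>
    rw [prod_Icc_succ_top (by omega), mul_assoc, dseqRatio_add_one_mul, ih]

theorem Telescopic.exists_mul_dseqRatio_eq_sum (htel : Telescopic m a) {t : ℕ} (ht : 1 ≤ t)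
    (htm : t + 1 ≤ m) :
    ∃ k : ℕ → ℕ, a (t + 1) * dseqRatio a (t + 1) = ∑ j ∈ Icc 1 t, a j * k j := by
  obtain ⟨k, hk⟩ := htel (t + 1) (by omega) htm
  rw [Nat.add_sub_cancel] at hk
  refine ⟨k, ?_⟩
  calc a (t + 1) * dseqRatio a (t + 1)
      = a (t + 1) / dseq a (t + 1) * dseq a t := by
        rw [← dseqRatio_add_one_mul (t := t), mul_comm (dseqRatio a _), ← mul_assoc,
          Nat.div_mul_cancel (dseq_dvd (mem_Icc.mpr ⟨by omega, le_rfl⟩))]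
    _ = ∑ j ∈ Icc 1 t, a j * k j := by
        rw [hk, sum_mul]
        refine sum_congr rfl fun j hj => ?_
        rw [mul_right_comm, Nat.div_mul_cancel (dseq_dvd hj)]

theorem Telescopic.exists_repr_lt_dseqRatio (ha : 0 < a 1) (htel : Telescopic m a) {t : ℕ}
    (ht : 1 ≤ t) (htm : t ≤ m) (x : ℕ → ℕ) :
    ∃ k, ∃ y : ℕ → ℕ, (∀ i ∈ Icc 2 t, y i < dseqRatio a i) ∧
      ∑ i ∈ Icc 1 t, a i * x i = a 1 * k + ∑ i ∈ Icc 2 t, a i * y i := by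
  induction t, ht using Nat.le_induction generalizing x with
  | base => exact ⟨x 1, x, by simp, by simp⟩
  | succ t ht ih =>
    obtain ⟨c, hc⟩ := htel.exists_mul_dseqRatio_eq_sum ht htm
    set e := dseqRatio a (t + 1)
    obtain ⟨k, y, hy, hsum⟩ := ih (by omega) fun j => x j + x (t + 1) / e * c j
    refine ⟨k, Function.update y (t + 1) (x (t + 1) % e), fun i hi => ?_, ?_⟩
    · rcases eq_or_ne i (t + 1) with rfl | hne
      · simpa using Nat.mod_lt _ (dseqRatio_pos ha (by omega))
      · rw [Function.update_of_ne hne]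
        exact hy i (mem_Icc.mpr ⟨(mem_Icc.mp hi).1, by have := (mem_Icc.mp hi).2; omega⟩)
    · have hlow : ∑ i ∈ Icc 2 t, a i * Function.update y (t + 1) (x (t + 1) % e) i
          = ∑ i ∈ Icc 2 t, a i * y i :=
        sum_congr rfl fun i hi => by rw [Function.update_of_ne (by simp at hi; omega)]
      have hsplit : a (t + 1) * x (t + 1) = x (t + 1) / e * (a (t + 1) * e)
          + a (t + 1) * (x (t + 1) % e) := by
        conv_lhs => rw [← Nat.div_add_mod (x (t + 1)) e]
        ring
      rw [sum_Icc_succ_top (by omega), sum_Icc_succ_top (by omega), hlow,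
        Function.update_self, ← add_assoc, ← hsum, hsplit, hc, mul_sum, ← add_assoc,
        ← sum_add_distrib]
      simp only [mul_add]
      congr 1
      exact sum_congr rfl fun j _ => by ring

theorem eq_of_sum_mul_modEq (ha : 0 < a 1) {t : ℕ} (ht : 1 ≤ t) {g h : ℕ → ℕ}
    (hg : ∀ i ∈ Icc 2 t, g i < dseqRatio a i) (hh : ∀ i ∈ Icc 2 t, h i < dseqRatio a i)
    (hmod : ∑ i ∈ Icc 2 t, a i * g i ≡ ∑ i ∈ Icc 2 t, a i * h i [MOD a 1]) :
    ∀ i ∈ Icc 2 t, g i = h i := by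
  induction t, ht using Nat.le_induction with
  | base => simp
  | succ t ht ih =>
    have hsub : Icc 2 t ⊆ Icc 2 (t + 1) := Icc_subset_Icc_right (by omega)
    have htop : t + 1 ∈ Icc 2 (t + 1) := mem_Icc.mpr ⟨by omega, le_rfl⟩
    rw [sum_Icc_succ_top (by omega), sum_Icc_succ_top (by omega)] at hmod
    have hlow : ∀ f : ℕ → ℕ, ∑ i ∈ Icc 2 t, a i * f i ≡ 0 [MOD dseq a t] := fun f =>
      Nat.modEq_zero_iff_dvd.mpr <| dvd_sum fun i hi =>
        dvd_mul_of_dvd_left (dseq_dvd (Icc_subset_Icc_left (by omega) hi)) _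
    have htop_modEq : a (t + 1) * g (t + 1) ≡ a (t + 1) * h (t + 1) [MOD dseq a t] :=
      Nat.ModEq.add_left_cancel ((hlow g).trans (hlow h).symm)
        (hmod.of_dvd (dseq_dvd (mem_Icc.mpr ⟨le_rfl, ht⟩)))
    have htop_eq : g (t + 1) = h (t + 1) := by
      have := htop_modEq.cancel_left_div_gcd (dseq_pos ha ht)
      rw [← dseq_add_one] at this
      exact this.eq_of_lt_of_lt (hg _ htop) (hh _ htop)
    rw [htop_eq] at hmod
    have := ih (fun i hi => hg i (hsub hi)) (fun i hi => hh i (hsub hi))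
      (Nat.ModEq.add_right_cancel' _ hmod)
    intro i hi
    rcases eq_or_ne i (t + 1) with rfl | hne
    · exact htop_eq
    · exact this i (mem_Icc.mpr ⟨(mem_Icc.mp hi).1, by have := (mem_Icc.mp hi).2; omega⟩)

noncomputable def aperyBound (m : ℕ) (a : ℕ → ℕ) : ℕ →₀ ℕ :=
  Finsupp.indicator (Icc 2 m) fun i _ => dseqRatio a i - 1

theorem mem_Iic_aperyBound (ha : 0 < a 1) {g : ℕ →₀ ℕ} :
    g ∈ Iic (aperyBound m a) ↔ (∀ i ∈ Icc 2 m, g i < dseqRatio a i) ∧ ∀ i ∉ Icc 2 m, g i = 0 := by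
  simp only [mem_Iic, Finsupp.le_def, aperyBound, Finsupp.indicator_apply]
  constructor
  · intro hg
    refine ⟨fun i hi => ?_, fun i hi => ?_⟩
    · have := hg i
      have := dseqRatio_pos ha (mem_Icc.mp hi).1
      simp only [hi, dite_true] at *
      omega
    · simpa [hi] using hg i
  · rintro ⟨hlt, hzero⟩ i
    by_cases hi : i ∈ Icc 2 m
    · simpa [hi, Nat.le_sub_one_iff_lt (dseqRatio_pos ha (mem_Icc.mp hi).1)] using hlt i hi
    · simp [hi, hzero i hi]

theorem card_Iic_aperyBound (ha : 0 < a 1) (hm : 1 ≤ m) (hd : dseq a m = 1) :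
    #(Iic (aperyBound m a)) = a 1 := by
  have hsupp : (aperyBound m a).support ⊆ Icc 2 m := Finsupp.support_indicator_subset _ _
  rw [Finsupp.card_Iic, prod_subset hsupp fun i _ hi => by
    rw [Finsupp.notMem_support_iff.mp hi, Nat.card_Iic, zero_add]]
  rw [← prod_dseqRatio_mul_dseq (a := a) hm, hd, mul_one]
  refine prod_congr rfl fun i hi => ?_
  rw [Nat.card_Iic, aperyBound, Finsupp.indicator_of_mem hi,
    Nat.sub_add_cancel (dseqRatio_pos ha (mem_Icc.mp hi).1)]

theorem injOn_sum_mul_mod_aperyBound (ha : 0 < a 1) (hm : 1 ≤ m) :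
    Set.InjOn (fun g : ℕ →₀ ℕ => (∑ i ∈ Icc 2 m, a i * g i) % a 1) (Iic (aperyBound m a)) := by
  intro g hg h hh hmod
  rw [mem_coe, mem_Iic_aperyBound ha] at hg hh
  ext i
  by_cases hi : i ∈ Icc 2 m
  · exact eq_of_sum_mul_modEq ha hm hg.1 hh.1 hmod i hi
  · rw [hg.2 i hi, hh.2 i hi]

theorem Telescopic.exists_repr_iff (ha : 0 < a 1) (htel : Telescopic m a) (hm : 1 ≤ m) {n : ℕ} :
    (∃ x : ℕ → ℕ, n = ∑ i ∈ Icc 1 m, a i * x i) ↔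
      ∃ k, ∃ g ∈ Iic (aperyBound m a), n = a 1 * k + ∑ i ∈ Icc 2 m, a i * g i := by
  constructor
  · rintro ⟨x, rfl⟩
    obtain ⟨k, y, hy, hsum⟩ := htel.exists_repr_lt_dseqRatio ha hm le_rfl x
    refine ⟨k, Finsupp.indicator (Icc 2 m) fun i _ => y i, ?_, ?_⟩
    · rw [mem_Iic_aperyBound ha]
      exact ⟨fun i hi => by simpa [Finsupp.indicator_of_mem hi] using hy i hi,
        fun i hi => Finsupp.indicator_of_notMem hi _⟩
    · rw [hsum]
      congr 1
      exact sum_congr rfl fun i hi => by rw [Finsupp.indicator_of_mem hi]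
  · rintro ⟨k, g, hg, rfl⟩
    refine ⟨Function.update g 1 k, ?_⟩
    rw [sum_Icc_one_eq_add hm, Function.update_self]
    congr 1
    refine sum_congr rfl fun i hi => ?_
    rw [Function.update_of_ne (by simp at hi; omega)]

theorem Telescopic.exists_repr_iff_le (ha : 0 < a 1) (htel : Telescopic m a) (hm : 1 ≤ m)
    {g : ℕ →₀ ℕ} (hg : g ∈ Iic (aperyBound m a)) {n : ℕ}
    (hn : n ≡ ∑ i ∈ Icc 2 m, a i * g i [MOD a 1]) :
    (∃ x : ℕ → ℕ, n = ∑ i ∈ Icc 1 m, a i * x i) ↔ ∑ i ∈ Icc 2 m, a i * g i ≤ n := by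
  rw [htel.exists_repr_iff ha hm]
  constructor
  · rintro ⟨k, g', hg', rfl⟩
    have : g' = g := injOn_sum_mul_mod_aperyBound ha hm hg' hg
      ((Nat.mul_add_mod _ _ _).symm.trans hn)
    rw [this]
    exact Nat.le_add_left _ _
  · intro hle
    obtain ⟨k, hk⟩ := (Nat.modEq_iff_dvd' hle).mp hn.symm
    exact ⟨k, g, hg, by omega⟩

theorem two_mul_sum_Iic_aperyBound (ha : 0 < a 1) (hm : 1 ≤ m) (hd : dseq a m = 1) :
    2 * ∑ g ∈ Iic (aperyBound m a), ∑ i ∈ Icc 2 m, a i * g i + a 1 * ∑ i ∈ Icc 2 m, a i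
      = a 1 * ∑ i ∈ Icc 2 m, a i * dseqRatio a i := by
  rw [Finsupp.two_mul_sum_Iic_sum_mul, card_Iic_aperyBound ha hm hd, ← mul_add,
    ← sum_add_distrib]
  refine congrArg (a 1 * ·) (sum_congr rfl fun i hi => ?_)
  have := dseqRatio_pos ha (mem_Icc.mp hi).1
  rw [aperyBound, Finsupp.indicator_of_mem hi, ← Nat.mul_succ, Nat.succ_eq_add_one,
    Nat.sub_add_cancel this]

end Telescopic

/-- For a telescopic sequence `(a_1,…,a_m)`, the number `g` of gaps of the
numerical semigroup `S = a_1 ℤ_{≥0} + ⋯ + a_m ℤ_{≥0}` satisfies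
`g = (1 + ∑_{i=2}^m a_i d_{i-1}/d_i - ∑_{i=1}^m a_i)/2`. -/
theorem telescopic_genus_formula
    (m : ℕ) (hm : 2 ≤ m) (a : ℕ → ℕ)
    (hpos : ∀ i, 1 ≤ i → i ≤ m → 0 < a i)
    (hgcd : (Finset.Icc 1 m).gcd a = 1)
    (htel : Telescopic m a) :
    2 * (Set.ncard {n : ℕ | ¬ ∃ x : ℕ → ℕ, n = ∑ i ∈ Finset.Icc 1 m, a i * x i} : ℤ)
      = 1 + ∑ i ∈ Finset.Icc 2 m, (a i : ℤ) * ((dseq a (i - 1) / dseq a i : ℕ) : ℤ)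
          - ∑ i ∈ Finset.Icc 1 m, (a i : ℤ) := by
  have hm1 : 1 ≤ m := by omega
  have ha : 0 < a 1 := hpos 1 le_rfl hm1
  have hselmer := mul_two_mul_ncard_compl_add
    (S := {n | ∃ x : ℕ → ℕ, n = ∑ i ∈ Icc 1 m, a i * x i}) ha
    (injOn_sum_mul_mod_aperyBound ha hm1) (card_Iic_aperyBound ha hm1 hgcd)
    fun g hg n hn => htel.exists_repr_iff_le ha hm1 hg hn
  have hgenus : 2 * Set.ncard {n : ℕ | ¬ ∃ x : ℕ → ℕ, n = ∑ i ∈ Icc 1 m, a i * x i} + (a 1 - 1)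
      + ∑ i ∈ Icc 2 m, a i = ∑ i ∈ Icc 2 m, a i * dseqRatio a i := by
    rw [← Set.compl_ofPred]
    refine Nat.eq_of_mul_eq_mul_left ha ?_
    rw [mul_add, mul_add, hselmer, two_mul_sum_Iic_aperyBound ha hm1 hgcd]
  have hgenusZ := congrArg (Nat.cast : ℕ → ℤ) hgenus
  push_cast [Nat.cast_sub ha] at hgenusZ
  rw [sum_Icc_one_eq_add hm1]
  change _ = 1 + ∑ i ∈ Icc 2 m, (a i : ℤ) * ((dseqRatio a i : ℕ) : ℤ) - _
  linarith
end

section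
/- Let (a_1,…,a_m) be a telescopic sequence, S the numerical semigroup it generates, and g ≥ 1 the number of gaps. Then S is symmetric: for every integer n with 0 ≤ n ≤ 2g − 1, n belongs to S if and only if 2g − 1 − n does not belong to S. -/
/-!
Induct on `m`. With `d = d_{m-1}` and `b_j = a_j / d`, the sequence `b_1, …, b_{m-1}` is again
telescopic with gcd `1`, and since `a_m` lies in the semigroup `T` generated by the `b_j` while
`gcd(a_m, d) = 1`, every element of `S` is uniquely `d w + t a_m` with `w ∈ T` and `0 ≤ t < d`.
So if `T` is symmetric about `F'`, i.e. `n ∈ T ↔ F' - n ∉ T`, then `S` is symmetric about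
`d F' + (d - 1) a_m`. Finally, for a symmetric semigroup `n ↦ F - n` exchanges gaps and elements
in `[0, F]`, whence `F = 2g - 1`.
-/

open Finset

-- A submonoid of `ℤ` rather than a set of naturals, so that the reflection `n ↦ F - n` is total.
def generatedSemigroup (m : ℕ) (a : ℕ → ℕ) : AddSubmonoid ℤ where
  carrier := {n | ∃ x : ℕ → ℕ, n = ∑ i ∈ Icc 1 m, (a i : ℤ) * x i}
  zero_mem' := ⟨0, by simp⟩
  add_mem' := by
    rintro _ _ ⟨x, rfl⟩ ⟨y, rfl⟩
    exact ⟨x + y, by simp [mul_add, sum_add_distrib]⟩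

def IsSymmetricAbout (S : Set ℤ) (F : ℤ) : Prop :=
  ∀ n, n ∈ S ↔ F - n ∉ S

section Telescopic

variable {a : ℕ → ℕ} {d i m : ℕ}

lemma dseq_succ (a : ℕ → ℕ) (m : ℕ) : dseq a (m + 1) = Nat.gcd (a (m + 1)) (dseq a m) := by
  rw [dseq, ← insert_Icc_right_eq_Icc_add_one (by omega), gcd_insert]
  rfl

lemma dseq_div (hd : 0 < d) (hdvd : ∀ j ∈ Icc 1 i, d ∣ a j) :
    dseq (fun j => a j / d) i = dseq a i / d := by
  have : dseq a i = d * dseq (fun j => a j / d) i :=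
    calc dseq a i = (Icc 1 i).gcd fun j => d * (a j / d) :=
          gcd_congr rfl fun j hj => (Nat.mul_div_cancel' (hdvd j hj)).symm
      _ = d * dseq (fun j => a j / d) i := by rw [Finset.gcd_mul_left, normalize_eq, dseq]
  rw [this, Nat.mul_div_cancel_left _ hd]

lemma Telescopic.mono {k : ℕ} (htel : Telescopic m a) (hk : k ≤ m) : Telescopic k a :=
  fun i hi him => htel i hi (him.trans hk)

lemma Telescopic.div (htel : Telescopic m a) (hd : 0 < d) (hdvd : ∀ j ∈ Icc 1 m, d ∣ a j) :
    Telescopic m (fun j => a j / d) := by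
  have hquot : ∀ i ≤ m, ∀ j, a j / d / dseq (fun j => a j / d) i = a j / dseq a i := by
    intro i hi j
    have hd_dseq : d ∣ dseq a i := dvd_gcd fun j hj => hdvd j (Icc_subset_Icc_right hi hj)
    rw [dseq_div hd fun j hj => hdvd j (Icc_subset_Icc_right hi hj), Nat.div_div_eq_div_mul,
      Nat.mul_div_cancel' hd_dseq]
  intro i hi him
  obtain ⟨k, hk⟩ := htel i hi him
  refine ⟨k, ?_⟩
  simp only [hquot i him, hquot (i - 1) (by omega), hk]

end Telescopic

section GeneratedSemigroup

variable {a : ℕ → ℕ} {d m : ℕ} {n : ℤ}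

lemma mem_generatedSemigroup :
    n ∈ generatedSemigroup m a ↔ ∃ x : ℕ → ℕ, n = ∑ i ∈ Icc 1 m, (a i : ℤ) * x i :=
  Iff.rfl

lemma natCast_mem_generatedSemigroup (n : ℕ) :
    (n : ℤ) ∈ generatedSemigroup m a ↔ ∃ x : ℕ → ℕ, n = ∑ i ∈ Icc 1 m, a i * x i := by
  simp only [mem_generatedSemigroup]
  constructor <;> rintro ⟨x, hx⟩ <;> exact ⟨x, by exact_mod_cast hx⟩

lemma nonneg_of_mem_generatedSemigroup (hn : n ∈ generatedSemigroup m a) : 0 ≤ n := by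
  obtain ⟨x, rfl⟩ := hn
  positivity

lemma mem_generatedSemigroup_succ :
    n ∈ generatedSemigroup (m + 1) a ↔
      ∃ w ∈ generatedSemigroup m a, ∃ t : ℕ, n = w + t * a (m + 1) := by
  simp only [mem_generatedSemigroup, sum_Icc_succ_top (Nat.le_add_left 1 m)]
  constructor
  · rintro ⟨x, rfl⟩
    exact ⟨_, ⟨x, rfl⟩, x (m + 1), by ring⟩
  · rintro ⟨_, ⟨y, rfl⟩, t, rfl⟩
    refine ⟨Function.update y (m + 1) t, ?_⟩
    rw [Function.update_self, mul_comm]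
    congr 1
    refine sum_congr rfl fun i hi => ?_
    rw [Function.update_of_ne (by grind)]

lemma mem_generatedSemigroup_iff_of_dvd (hdvd : ∀ j ∈ Icc 1 m, d ∣ a j) :
    n ∈ generatedSemigroup m a ↔ ∃ w ∈ generatedSemigroup m (fun j => a j / d), n = d * w := by
  have hfactor : ∀ x : ℕ → ℕ, ∑ i ∈ Icc 1 m, (a i : ℤ) * x i =
      d * ∑ i ∈ Icc 1 m, ((a i / d : ℕ) : ℤ) * x i := by
    intro x
    rw [mul_sum]
    refine sum_congr rfl fun i hi => ?_
    rw [← mul_assoc, ← Nat.cast_mul d, Nat.mul_div_cancel' (hdvd i hi)]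
  constructor
  · rintro ⟨x, rfl⟩
    exact ⟨_, ⟨x, rfl⟩, hfactor x⟩
  · rintro ⟨_, ⟨x, rfl⟩, rfl⟩
    exact ⟨x, (hfactor x).symm⟩

lemma mem_generatedSemigroup_succ_iff_of_dvd (hd : 0 < d) (hdvd : ∀ j ∈ Icc 1 m, d ∣ a j)
    (hA : (a (m + 1) : ℤ) ∈ generatedSemigroup m (fun j => a j / d)) :
    n ∈ generatedSemigroup (m + 1) a ↔
      ∃ t : ℕ, t < d ∧ ∃ w ∈ generatedSemigroup m (fun j => a j / d),
        n = d * w + t * a (m + 1) := by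
  rw [mem_generatedSemigroup_succ]
  constructor
  · rintro ⟨_, hdw, t, rfl⟩
    obtain ⟨w, hw, rfl⟩ := (mem_generatedSemigroup_iff_of_dvd hdvd).1 hdw
    refine ⟨t % d, Nat.mod_lt _ hd, w + (t / d) • (a (m + 1) : ℤ),
      add_mem hw (AddSubmonoid.nsmul_mem _ hA _), ?_⟩
    have ht : (t : ℤ) = d * (t / d : ℕ) + (t % d : ℕ) := by
      exact_mod_cast (Nat.div_add_mod t d).symm
    rw [nsmul_eq_mul, ht]
    ring
  · rintro ⟨t, -, w, hw, rfl⟩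
    exact ⟨d * w, (mem_generatedSemigroup_iff_of_dvd hdvd).2 ⟨w, hw, rfl⟩, t, rfl⟩

lemma isSymmetricAbout_generatedSemigroup_one (h : a 1 = 1) :
    IsSymmetricAbout (generatedSemigroup 1 a) (-1) := by
  have hmem : ∀ n, n ∈ generatedSemigroup 1 a ↔ 0 ≤ n := fun n =>
    ⟨nonneg_of_mem_generatedSemigroup,
      fun hn => ⟨fun _ => n.toNat, by simp [h, Int.toNat_of_nonneg hn]⟩⟩
  intro n
  rw [SetLike.mem_coe, SetLike.mem_coe, hmem, hmem]
  omega

end GeneratedSemigroup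

section CoprimeShift

variable {d : ℕ} {A : ℤ}

lemma exists_eq_mul_add_mul (hd : 0 < d) (hA : IsCoprime A d) (n : ℤ) :
    ∃ t : ℕ, t < d ∧ ∃ w : ℤ, n = d * w + t * A := by
  obtain ⟨u, v, huv⟩ := hA
  have h0 : 0 ≤ n * u % d := Int.emod_nonneg _ (by omega)
  have hlt : n * u % d < d := Int.emod_lt_of_pos _ (by omega)
  refine ⟨(n * u % d).toNat, by omega, n * v + n * u / d * A, ?_⟩
  rw [Int.toNat_of_nonneg h0, Int.emod_def]
  linear_combination (-n) * huv

lemma eq_of_mul_add_mul_eq (hA : IsCoprime A d) {t t' : ℕ} (ht : t < d) (ht' : t' < d)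
    {w w' : ℤ} (h : d * w + t * A = d * w' + t' * A) : t = t' ∧ w = w' := by
  have hdvd : (d : ℤ) ∣ ((t' : ℤ) - t) * A := ⟨w - w', by linear_combination -h⟩
  have htt : (t' : ℤ) - t = 0 :=
    Int.eq_zero_of_abs_lt_dvd (hA.symm.dvd_of_dvd_mul_right hdvd) (by rw [abs_lt]; omega)
  have hww : (d : ℤ) * (w - w') = 0 := by linear_combination h + A * htt
  exact ⟨by omega, sub_eq_zero.1 ((mul_eq_zero.1 hww).resolve_left (by omega))⟩

lemma IsSymmetricAbout.of_mem_iff_mul_add_mul {S T : Set ℤ} {F : ℤ}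
    (hT : IsSymmetricAbout T F) (hd : 0 < d) (hA : IsCoprime A d)
    (hS : ∀ n, n ∈ S ↔ ∃ t : ℕ, t < d ∧ ∃ w ∈ T, n = d * w + t * A) :
    IsSymmetricAbout S (d * F + (d - 1) * A) := by
  have hmem : ∀ {t : ℕ} {w : ℤ}, t < d → (d * w + t * A ∈ S ↔ w ∈ T) := by
    intro t w ht
    rw [hS]
    constructor
    · rintro ⟨t', ht', w', hw', h⟩
      obtain ⟨-, rfl⟩ := eq_of_mul_add_mul_eq hA ht ht' h
      exact hw'
    · exact fun hw => ⟨t, ht, w, hw, rfl⟩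
  intro n
  obtain ⟨t, ht, w, rfl⟩ := exists_eq_mul_add_mul hd hA n
  have hreflect :
      d * F + (d - 1) * A - (d * w + t * A) = d * (F - w) + (d - 1 - t : ℕ) * A := by
    rw [(by omega : ((d - 1 - t : ℕ) : ℤ) = d - 1 - t)]
    ring
  rw [hmem ht, hreflect, hmem (by omega)]
  exact hT w

end CoprimeShift

theorem Telescopic.exists_isSymmetricAbout {m : ℕ} {a : ℕ → ℕ}
    (hgcd : (Icc 1 m).gcd a = 1) (htel : Telescopic m a) :
    ∃ F, IsSymmetricAbout (generatedSemigroup m a) F := by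
  induction m generalizing a with
  | zero => simp at hgcd
  | succ m ih =>
    rcases Nat.eq_zero_or_pos m with rfl | hm
    · exact ⟨-1, isSymmetricAbout_generatedSemigroup_one (by simpa using hgcd)⟩
    obtain ⟨k, hk⟩ := htel (m + 1) (by omega) le_rfl
    rw [show dseq a (m + 1) = 1 from hgcd, Nat.div_one, Nat.add_sub_cancel] at hk
    set d := dseq a m
    have hcop : Nat.gcd (a (m + 1)) d = 1 := (dseq_succ a m).symm.trans hgcd
    have hd : 0 < d := by
      -- else `a (m + 1) = gcd (a (m + 1)) 0 = 1`, but `hk` gives `a (m + 1) = ∑ j, a j / 0 * k j = 0`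
      by_contra! hd0
      rw [Nat.le_zero.1 hd0] at hcop hk
      simp_all
    have hdvd : ∀ j ∈ Icc 1 m, d ∣ a j := fun j hj => Finset.gcd_dvd hj
    have hgcd' : (Icc 1 m).gcd (fun j => a j / d) = 1 := by
      rw [← dseq, dseq_div hd hdvd, Nat.div_self hd]
    obtain ⟨F, hF⟩ := ih hgcd' ((htel.mono m.le_succ).div hd hdvd)
    have hA : (a (m + 1) : ℤ) ∈ generatedSemigroup m (fun j => a j / d) :=
      ⟨k, by exact_mod_cast hk⟩
    have hcoprime : IsCoprime (a (m + 1) : ℤ) d :=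
      Int.isCoprime_iff_gcd_eq_one.2 (by simpa [Int.gcd_natCast_natCast] using hcop)
    exact ⟨_, hF.of_mem_iff_mul_add_mul hd hcoprime fun n =>
      mem_generatedSemigroup_succ_iff_of_dvd hd hdvd hA⟩

lemma IsSymmetricAbout.two_mul_ncard_gaps {T : Set ℤ} {F : ℤ} (hT : IsSymmetricAbout T F)
    (hnonneg : ∀ n ∈ T, 0 ≤ n) : 2 * ({n : ℕ | (n : ℤ) ∉ T}.ncard : ℤ) = F + 1 := by
  classical
  have hF : -1 ≤ F := by
    by_contra! hF
    have hout : F + 1 ∉ T := fun h => by linarith [hnonneg _ h]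
    have hin : F - (F + 1) ∈ T := not_not.1 fun h => hout ((hT _).2 h)
    linarith [hnonneg _ hin]
  obtain ⟨N, hN⟩ : ∃ N : ℕ, (N : ℤ) = F + 1 := ⟨(F + 1).toNat, Int.toNat_of_nonneg (by omega)⟩
  have hgaps : {n : ℕ | (n : ℤ) ∉ T} = ↑((range N).filter fun n : ℕ => (n : ℤ) ∉ T) := by
    ext n
    simp only [Set.mem_ofPred_eq, coe_filter, mem_range]
    refine (and_iff_right_of_imp fun hn => ?_).symm
    by_contra! hN'
    exact hn ((hT n).2 fun h => by linarith [hnonneg _ h])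
  have hswap : #((range N).filter fun n : ℕ => (n : ℤ) ∉ T) =
      #((range N).filter fun n : ℕ => (n : ℤ) ∈ T) := by
    rw [card_filter, card_filter, ← sum_range_reflect]
    refine sum_congr rfl fun n hn => ?_
    simp only [(by grind : ((N - 1 - n : ℕ) : ℤ) = F - n), hT n]
  have htotal := card_filter_add_card_filter_not (s := range N) fun n : ℕ => (n : ℤ) ∈ T
  rw [card_range] at htotal
  rw [hgaps, Set.ncard_coe_finset]
  omega

theorem telescopic_symmetric_general
    (m : ℕ) (a : ℕ → ℕ)
    (hgcd : (Finset.Icc 1 m).gcd a = 1)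
    (htel : Telescopic m a)
    (g : ℕ)
    (hg : g = Set.ncard {n : ℕ | ¬ ∃ x : ℕ → ℕ, n = ∑ i ∈ Finset.Icc 1 m, a i * x i})
    (hg1 : 1 ≤ g) :
    ∀ n : ℕ, n ≤ 2 * g - 1 →
      ((∃ x : ℕ → ℕ, n = ∑ i ∈ Finset.Icc 1 m, a i * x i) ↔
        ¬ ∃ x : ℕ → ℕ, 2 * g - 1 - n = ∑ i ∈ Finset.Icc 1 m, a i * x i) := by
  obtain ⟨F, hF⟩ := htel.exists_isSymmetricAbout hgcd
  have hcount := hF.two_mul_ncard_gaps fun _ => nonneg_of_mem_generatedSemigroup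
  simp only [SetLike.mem_coe, natCast_mem_generatedSemigroup, ← hg] at hcount
  intro n hn
  rw [← natCast_mem_generatedSemigroup, ← natCast_mem_generatedSemigroup,
    (by omega : ((2 * g - 1 - n : ℕ) : ℤ) = F - n)]
  exact hF n

/-- The numerical semigroup of a telescopic sequence is symmetric: for every
`0 ≤ n ≤ 2g - 1`, `n ∈ S` if and only if `2g - 1 - n ∉ S`, where `g ≥ 1` is the
number of gaps of `S = a_1 ℤ_{≥0} + ⋯ + a_m ℤ_{≥0}`. -/
theorem telescopic_symmetric
    (m : ℕ) (hm : 2 ≤ m) (a : ℕ → ℕ)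
    (hpos : ∀ i, 1 ≤ i → i ≤ m → 0 < a i)
    (hgcd : (Finset.Icc 1 m).gcd a = 1)
    (htel : Telescopic m a)
    (g : ℕ)
    (hg : g = Set.ncard {n : ℕ | ¬ ∃ x : ℕ → ℕ, n = ∑ i ∈ Finset.Icc 1 m, a i * x i})
    (hg1 : 1 ≤ g) :
    ∀ n : ℕ, n ≤ 2 * g - 1 →
      ((∃ x : ℕ → ℕ, n = ∑ i ∈ Finset.Icc 1 m, a i * x i) ↔
        ¬ ∃ x : ℕ → ℕ, 2 * g - 1 - n = ∑ i ∈ Finset.Icc 1 m, a i * x i) :=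
  telescopic_symmetric_general m a hgcd htel g hg hg1
end
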